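/- arXiv:1309.4022 — 6 statements merged into one kernel-verified Lean document; each statement's English description precedes it below -/
import Mathlib

section
/- A connected graph G admits a universal clique decomposition if and only if G is trivially perfect. -/
open SimpleGraph

universe u

/-- A graph is *trivially perfect* if it has no induced subgraph isomorphic to `C₄` or `P₄`. -/
def TriviallyPerfect {V : Type u} (G : SimpleGraph V) : Prop :=
  IsEmpty (SimpleGraph.cycleGraph 4 ↪g G) ∧ IsEmpty (SimpleGraph.pathGraph 4 ↪g G)

/-- A *universal clique decomposition* of a graph `G`: a finite rooted tree (modelled as a
finite partial order in which the set of elements above any element is a chain and which has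
a top element, the root) together with a partition of the vertices into nonempty bags such that
adjacent vertices lie in comparable nodes, and each bag is exactly the set of universal
vertices of the subgraph induced by the union of the bags in the subtree below it. -/
structure UCD {V : Type u} (G : SimpleGraph V) : Type (u + 1) where
  ι : Type u
  [po : PartialOrder ι]
  [ot : OrderTop ι]
  [fin : Fintype ι]
  bag : ι → Set V
  bag_nonempty : ∀ t, (bag t).Nonempty
  bag_disjoint : ∀ s t, s ≠ t → Disjoint (bag s) (bag t)
  bag_cover : ∀ v, ∃ t, v ∈ bag t
  up_chain : ∀ a b c : ι, a ≤ b → a ≤ c → b ≤ c ∨ c ≤ b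
  adj_comparable : ∀ v w s t, G.Adj v w → v ∈ bag t → w ∈ bag s → s ≤ t ∨ t ≤ s
  bag_eq_universal : ∀ t, bag t =
    {v | (∃ s ≤ t, v ∈ bag s) ∧ ∀ w, (∃ s ≤ t, w ∈ bag s) → w ≠ v → G.Adj v w}

attribute [instance] UCD.po UCD.ot UCD.fin

namespace UCD

variable {V : Type u} {G : SimpleGraph V} (U : UCD G)

/-- `D_t`: the union of the bags in the subtree rooted at `t`. -/
def subtreeSet (t : U.ι) : Set V := {v | ∃ s, s ≤ t ∧ v ∈ U.bag s}

/-- `Q_t`: the union of the bags on the path from `t` to the root. -/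
def tailSet (t : U.ι) : Set V := {v | ∃ s, t ≤ s ∧ v ∈ U.bag s}

/-- `t` is a leaf of the decomposition tree. -/
def IsLeaf (t : U.ι) : Prop := ∀ s : U.ι, s ≤ t → s = t

end UCD

/-- `G + S`: the graph obtained from `G` by adding the pairs in `S` as edges. -/
def completes {V : Type u} (G : SimpleGraph V) (S : Set (Sym2 V)) : SimpleGraph V :=
  G ⊔ SimpleGraph.fromEdgeSet S

/-- `S` is a set of non-edges of `G` (unordered pairs of distinct vertices, none an edge). -/
def IsCompletionSet {V : Type u} (G : SimpleGraph V) (S : Set (Sym2 V)) : Prop :=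
  (∀ e ∈ S, ¬ e.IsDiag) ∧ Disjoint S G.edgeSet

/-- `S` is a minimal trivially perfect completion of `G`. -/
def IsMinTPCompletion {V : Type u} (G : SimpleGraph V) (S : Set (Sym2 V)) : Prop :=
  IsCompletionSet G S ∧ TriviallyPerfect (completes G S) ∧
    ∀ S' ⊂ S, ¬ TriviallyPerfect (completes G S')

/-- A vital potential maximal clique of `(G, k)`. -/
def VitalPMC {V : Type u} (G : SimpleGraph V) (k : ℕ) (Ω : Set V) : Prop :=
  ∃ S, IsMinTPCompletion G S ∧ S.ncard ≤ k ∧ Maximal (completes G S).IsClique Ω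

/-! A graph is trivially perfect iff every path `a - b - c - d` has a chord `ac` or `bd`: a
chordless one is an induced `C₄` or `P₄`, according as `ad` is an edge.

In a universal clique decomposition two distinct vertices are adjacent iff their nodes are
comparable, and since the nodes above any node form a chain, comparability in the tree admits
no chordless such path.

Conversely, in a trivially perfect graph the closed neighbourhoods of adjacent vertices are
nested. Hence the closed neighbourhoods, ordered by inclusion, form a rooted tree, with the bag
at `N[u]` the set of vertices whose closed neighbourhood is `N[u]`; its root is `N[r] = V` for
a vertex `r` with maximal closed neighbourhood, which is universal when `G` is connected. -/

theorem triviallyPerfect_iff_adj_or_adj {V : Type*} {G : SimpleGraph V} :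
    TriviallyPerfect G ↔ ∀ ⦃a b c d : V⦄, G.Adj a b → G.Adj b c → G.Adj c d → a ≠ c → b ≠ d →
      G.Adj a c ∨ G.Adj b d := by
  constructor
  · rintro ⟨hC4, hP4⟩ a b c d hab hbc hcd hac hbd
    by_contra! hchord
    obtain ⟨nac, nbd⟩ := hchord
    have hinj : Function.Injective ![a, b, c, d] := by
      have := hab.ne; have := hbc.ne; have := hcd.ne
      have had : a ≠ d := by rintro rfl; exact nbd hab.symm
      intro i j h
      fin_cases i <;> fin_cases j <;> simp_all [eq_comm]
    by_cases had : G.Adj a d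
    · exact hC4.false ⟨⟨_, hinj⟩, by
        intro i j; fin_cases i <;> fin_cases j <;> simp [*, G.adj_comm] <;> decide⟩
    · exact hP4.false ⟨⟨_, hinj⟩, by
        intro i j; fin_cases i <;> fin_cases j <;> simp [pathGraph_adj, *, G.adj_comm]⟩
  · intro h
    have isEmpty_embedding : ∀ H : SimpleGraph (Fin 4), H.Adj 0 1 → H.Adj 1 2 → H.Adj 2 3 →
        ¬ H.Adj 0 2 → ¬ H.Adj 1 3 → IsEmpty (H ↪g G) := by
      refine fun H h01 h12 h23 n02 n13 => ⟨fun f => ?_⟩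
      have := h (f.map_adj_iff.2 h01) (f.map_adj_iff.2 h12) (f.map_adj_iff.2 h23)
        (f.injective.ne (by decide)) (f.injective.ne (by decide))
      rw [f.map_adj_iff, f.map_adj_iff] at this
      tauto
    exact ⟨isEmpty_embedding _ (by decide) (by decide) (by decide) (by decide) (by decide),
      isEmpty_embedding _ (by simp [pathGraph_adj]) (by simp [pathGraph_adj])
        (by simp [pathGraph_adj]) (by simp [pathGraph_adj]) (by simp [pathGraph_adj])⟩

theorem le_of_comparable_of_incomparable {α : Type*} [Preorder α]
    (hchain : ∀ a b c : α, a ≤ b → a ≤ c → b ≤ c ∨ c ≤ b) {a b c : α}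
    (hab : a ≤ b ∨ b ≤ a) (hbc : b ≤ c ∨ c ≤ b) (hac : ¬(a ≤ c ∨ c ≤ a)) : a ≤ b := by
  refine hab.resolve_right fun hba => hac ?_
  rcases hbc with hbc | hcb
  · exact hchain b a c hba hbc
  · exact .inr (hcb.trans hba)

namespace UCD

variable {V : Type u} {G : SimpleGraph V}

theorem adj_iff_comparable (U : UCD G) {v w : V} {s t : U.ι} (hv : v ∈ U.bag s)
    (hw : w ∈ U.bag t) (hne : v ≠ w) : G.Adj v w ↔ s ≤ t ∨ t ≤ s := by
  refine ⟨fun h => (U.adj_comparable v w t s h hv hw).symm, ?_⟩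
  rintro (hst | hts)
  · rw [U.bag_eq_universal t] at hw
    exact (hw.2 v ⟨s, hst, hv⟩ hne).symm
  · rw [U.bag_eq_universal s] at hv
    exact hv.2 w ⟨t, hts, hw⟩ hne.symm

theorem triviallyPerfect (U : UCD G) : TriviallyPerfect G := by
  rw [triviallyPerfect_iff_adj_or_adj]
  intro a b c d hab hbc hcd hac hbd
  by_contra! hchord
  choose node hnode using U.bag_cover
  have hcomp {v w : V} (h : G.Adj v w) : node v ≤ node w ∨ node w ≤ node v :=
    (U.adj_iff_comparable (hnode v) (hnode w) h.ne).1 h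
  have hincomp {v w : V} (hne : v ≠ w) (h : ¬ G.Adj v w) : ¬(node v ≤ node w ∨ node w ≤ node v) :=
    mt (U.adj_iff_comparable (hnode v) (hnode w) hne).2 h
  have hab' : node a ≤ node b := le_of_comparable_of_incomparable U.up_chain (hcomp hab)
    (hcomp hbc) (hincomp hac hchord.1)
  have hbc' : node b ≤ node c := le_of_comparable_of_incomparable U.up_chain (hcomp hbc)
    (hcomp hcd) (hincomp hbd hchord.2)
  exact hincomp hac hchord.1 (.inl (hab'.trans hbc'))

end UCD

namespace SimpleGraph

variable {V : Type u} {G : SimpleGraph V} {v w : V}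

def closedNeighborSet (G : SimpleGraph V) (v : V) : Set V := insert v (G.neighborSet v)

theorem mem_closedNeighborSet : w ∈ G.closedNeighborSet v ↔ w = v ∨ G.Adj v w := Iff.rfl

theorem self_mem_closedNeighborSet (v : V) : v ∈ G.closedNeighborSet v := Set.mem_insert v _

theorem mem_closedNeighborSet_comm : w ∈ G.closedNeighborSet v ↔ v ∈ G.closedNeighborSet w := by
  rw [mem_closedNeighborSet, mem_closedNeighborSet, G.adj_comm, eq_comm]

end SimpleGraph

namespace TriviallyPerfect

variable {V : Type u} {G : SimpleGraph V}

theorem closedNeighborSet_subset_or_subset (hTP : TriviallyPerfect G) {v w : V} (h : G.Adj v w) :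
    G.closedNeighborSet v ⊆ G.closedNeighborSet w ∨
      G.closedNeighborSet w ⊆ G.closedNeighborSet v := by
  by_contra! hc
  obtain ⟨x, hxv, hxw⟩ := Set.not_subset.mp hc.1
  obtain ⟨y, hyw, hyv⟩ := Set.not_subset.mp hc.2
  have hvx : G.Adj v x := (mem_closedNeighborSet.1 hxv).resolve_left
    (ne_of_mem_of_not_mem (mem_closedNeighborSet.2 (.inr h.symm)) hxw).symm
  have hwy : G.Adj w y := (mem_closedNeighborSet.1 hyw).resolve_left
    (ne_of_mem_of_not_mem (mem_closedNeighborSet.2 (.inr h)) hyv).symm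
  rcases triviallyPerfect_iff_adj_or_adj.1 hTP hvx.symm h hwy
    (ne_of_mem_of_not_mem (self_mem_closedNeighborSet w) hxw).symm
    (ne_of_mem_of_not_mem (self_mem_closedNeighborSet v) hyv) with hxw' | hvy
  · exact hxw (mem_closedNeighborSet.2 (.inr hxw'.symm))
  · exact hyv (mem_closedNeighborSet.2 (.inr hvy))

theorem exists_closedNeighborSet_eq_univ [Finite V] (hTP : TriviallyPerfect G)
    (hG : G.Connected) : ∃ r, G.closedNeighborSet r = Set.univ := by
  have := hG.nonempty
  obtain ⟨r, -, hr⟩ := Set.finite_univ.exists_maximalFor G.closedNeighborSet Set.univ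
    Set.univ_nonempty
  have hclosed {y z : V} (hy : y ∈ G.closedNeighborSet r) (hyz : G.Adj y z) :
      z ∈ G.closedNeighborSet r := by
    rcases mem_closedNeighborSet.1 hy with rfl | hry
    · exact mem_closedNeighborSet.2 (.inr hyz)
    rcases hTP.closedNeighborSet_subset_or_subset hry with hsub | hsub
    · exact hr trivial hsub (mem_closedNeighborSet.2 (.inr hyz))
    · exact hsub (mem_closedNeighborSet.2 (.inr hyz))
  refine ⟨r, Set.eq_univ_of_forall fun x => ?_⟩
  induction (reachable_iff_reflTransGen r x).1 (hG.preconnected r x) with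
  | refl => exact self_mem_closedNeighborSet r
  | tail _ hyz ih => exact hclosed ih hyz

theorem closedNeighborSet_eq_iff (hTP : TriviallyPerfect G) {u v : V} :
    G.closedNeighborSet v = G.closedNeighborSet u ↔ G.closedNeighborSet v ⊆ G.closedNeighborSet u ∧
      ∀ w, G.closedNeighborSet w ⊆ G.closedNeighborSet u → w ∈ G.closedNeighborSet v := by
  refine ⟨fun h => ⟨h.le, fun w hw => h ▸ hw (self_mem_closedNeighborSet w)⟩,
    fun ⟨hvu, huniv⟩ => hvu.antisymm fun x hx => ?_⟩
  rcases mem_closedNeighborSet.1 hx with rfl | hux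
  · exact huniv x subset_rfl
  rcases hTP.closedNeighborSet_subset_or_subset hux with hsub | hsub
  · exact mem_closedNeighborSet_comm.1 (hsub (hvu (self_mem_closedNeighborSet v)))
  · exact huniv x hsub

noncomputable def ucd [Finite V] (hTP : TriviallyPerfect G) {r : V}
    (hr : G.closedNeighborSet r = Set.univ) : UCD G where
  ι := Set.range G.closedNeighborSet
  ot := { top := ⟨Set.univ, r, hr⟩, le_top := fun _ => Set.subset_univ _ }
  fin := Fintype.ofFinite _
  bag A := {v | G.closedNeighborSet v = A}
  bag_nonempty := fun ⟨_, v, hv⟩ => ⟨v, hv⟩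
  bag_disjoint s t hst := Set.disjoint_left.2 fun _ hs ht => hst (Subtype.ext (hs.symm.trans ht))
  bag_cover v := ⟨⟨_, v, rfl⟩, rfl⟩
  up_chain := by
    rintro ⟨_, x, rfl⟩ ⟨_, y, rfl⟩ ⟨_, z, rfl⟩ hxy hxz
    have hyz : y ∈ G.closedNeighborSet z :=
      hxz (mem_closedNeighborSet_comm.1 (hxy (self_mem_closedNeighborSet x)))
    rcases mem_closedNeighborSet.1 hyz with rfl | hzy
    · exact .inl le_rfl
    · exact (hTP.closedNeighborSet_subset_or_subset hzy).symm
  adj_comparable := by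
    intro v w s t h hv hw
    change s.1 ⊆ t.1 ∨ t.1 ⊆ s.1
    rw [← show G.closedNeighborSet v = t from hv, ← show G.closedNeighborSet w = s from hw]
    exact (hTP.closedNeighborSet_subset_or_subset h).symm
  bag_eq_universal := by
    rintro ⟨_, u, rfl⟩
    have hsubtree (w : V) : (∃ s ≤ (⟨_, u, rfl⟩ : Set.range G.closedNeighborSet),
        G.closedNeighborSet w = s) ↔ G.closedNeighborSet w ⊆ G.closedNeighborSet u :=
      ⟨fun ⟨_, hs, hw⟩ => hw ▸ hs, fun h => ⟨⟨_, w, rfl⟩, h, rfl⟩⟩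
    ext v
    simp only [Set.mem_ofPred_eq, hsubtree, hTP.closedNeighborSet_eq_iff, mem_closedNeighborSet,
      or_iff_not_imp_left, ne_eq]

end TriviallyPerfect

/-- A connected graph admits a universal clique decomposition iff it is trivially perfect. -/
theorem connected_nonempty_ucd_iff_triviallyPerfect {V : Type u} [Fintype V]
    (G : SimpleGraph V) (hG : G.Connected) :
    Nonempty (UCD G) ↔ TriviallyPerfect G := by
  refine ⟨fun ⟨U⟩ => U.triviallyPerfect, fun hTP => ?_⟩
  obtain ⟨r, hr⟩ := hTP.exists_closedNeighborSet_eq_univ hG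
  exact ⟨hTP.ucd hr⟩
end

section
/- Let (T, {B_t}) be the universal clique decomposition of a connected trivially perfect graph G, and let L = (B, D) be a leaf block of this decomposition with tail Q. Then Q = N_G[v] (the closed neighborhood of v in G) for every vertex v ∈ B. -/
open SimpleGraph

universe u

namespace UCD

variable {V : Type u} {G : SimpleGraph V} (U : UCD G)

theorem bag_subset_tailSet (t : U.ι) : U.bag t ⊆ U.tailSet t :=
  fun _ hv => ⟨t, le_rfl, hv⟩

theorem adj_of_mem_bag_of_le {s t : U.ι} {v w : V} (hst : s ≤ t) (hw : w ∈ U.bag t)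
    (hv : v ∈ U.bag s) (hne : w ≠ v) : G.Adj w v := by
  rw [U.bag_eq_universal t] at hw
  exact hw.2 v ⟨s, hst, hv⟩ hne.symm

theorem tailSet_subset_closedNeighborhood {t : U.ι} {v : V} (hv : v ∈ U.bag t) :
    U.tailSet t ⊆ insert v (G.neighborSet v) := by
  rintro w ⟨s, hts, hws⟩
  by_cases hwv : w = v
  · exact Or.inl hwv
  · exact Or.inr (U.adj_of_mem_bag_of_le hts hws hv hwv).symm

theorem neighborSet_subset_subtreeSet_union_tailSet {t : U.ι} {v : V} (hv : v ∈ U.bag t) :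
    G.neighborSet v ⊆ U.subtreeSet t ∪ U.tailSet t := by
  intro w hw
  obtain ⟨s, hws⟩ := U.bag_cover w
  rcases U.adj_comparable v w s t hw hv hws with hst | hts
  · exact Or.inl ⟨s, hst, hws⟩
  · exact Or.inr ⟨s, hts, hws⟩

variable {U}

theorem IsLeaf.subtreeSet_subset_bag {t : U.ι} (ht : U.IsLeaf t) : U.subtreeSet t ⊆ U.bag t := by
  rintro v ⟨s, hst, hvs⟩
  rwa [← ht s hst]

theorem IsLeaf.closedNeighborhood_subset_tailSet {t : U.ι} (ht : U.IsLeaf t) {v : V}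
    (hv : v ∈ U.bag t) : insert v (G.neighborSet v) ⊆ U.tailSet t := by
  refine Set.insert_subset (U.bag_subset_tailSet t hv) fun w hw => ?_
  rcases U.neighborSet_subset_subtreeSet_union_tailSet hv hw with hsub | htail
  · exact U.bag_subset_tailSet t (ht.subtreeSet_subset_bag hsub)
  · exact htail

end UCD

theorem ucd_leaf_tail_eq_closedNeighborhood_general {V : Type u} (G : SimpleGraph V)
    (U : UCD G) (t : U.ι)
    (hleaf : U.IsLeaf t) (v : V) (hv : v ∈ U.bag t) :
    U.tailSet t = insert v (G.neighborSet v) :=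
  (U.tailSet_subset_closedNeighborhood hv).antisymm (hleaf.closedNeighborhood_subset_tailSet hv)

/-- For a leaf block of the universal clique decomposition of a connected trivially perfect
graph, the tail equals the closed neighborhood of every vertex of the bag. -/
theorem ucd_leaf_tail_eq_closedNeighborhood {V : Type u} [Fintype V] (G : SimpleGraph V)
    (hG : G.Connected) (hTP : TriviallyPerfect G) (U : UCD G) (t : U.ι)
    (hleaf : U.IsLeaf t) (v : V) (hv : v ∈ U.bag t) :
    U.tailSet t = insert v (G.neighborSet v) :=
  ucd_leaf_tail_eq_closedNeighborhood_general G U t hleaf v hv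
end

section
/- Let (T, {B_t}) be the universal clique decomposition of a connected trivially perfect graph G, and let L = (B, D) be a non-leaf block with tail Q. Then for every two vertices u, v belonging to different connected components of the induced subgraph G[D \ B], one has Q = N_G(u) ∩ N_G(v), where N_G denotes the open neighborhood in G. -/
open SimpleGraph

universe u

/-!
A vertex of the tail `Q_t` lies in a bag `B_s` with `t ≤ s`, so it is universal in `D_s ⊇ D_t`
and hence adjacent to `u` and `v`, which lie in `D_t` but, the bags being disjoint, not in
`Q_t`. Conversely, a common neighbour `w` of `u` and `v` cannot lie in `D_t \ B_t`, where it
would join their components. If `w ∉ D_t`, the edge `uw` joins comparable nodes, and since the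
nodes above the node of `u` form a chain, the node of `w` lies above `t`.
-/

namespace UCD

variable {V : Type u} {G : SimpleGraph V} (U : UCD G)

theorem eq_of_mem_bag_of_mem_bag {v : V} {s s' : U.ι} (hs : v ∈ U.bag s) (hs' : v ∈ U.bag s') :
    s = s' := by
  by_contra hne
  exact (U.bag_disjoint s s' hne).ne_of_mem hs hs' rfl

theorem adj_of_mem_bag_of_mem_subtreeSet {s : U.ι} {w x : V} (hw : w ∈ U.bag s)
    (hx : x ∈ U.subtreeSet s) (hxw : x ≠ w) : G.Adj w x := by
  rw [U.bag_eq_universal s] at hw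
  exact hw.2 x hx hxw

theorem mem_bag_of_mem_subtreeSet_of_mem_tailSet {t : U.ι} {x : V} (hD : x ∈ U.subtreeSet t)
    (hQ : x ∈ U.tailSet t) : x ∈ U.bag t := by
  obtain ⟨s, hst, hs⟩ := hD
  obtain ⟨s', hts', hs'⟩ := hQ
  obtain rfl := U.eq_of_mem_bag_of_mem_bag hs hs'
  rwa [le_antisymm hst hts'] at hs

theorem tailSet_subset_neighborSet {t : U.ι} {x : V} (hx : x ∈ U.subtreeSet t \ U.bag t) :
    U.tailSet t ⊆ G.neighborSet x := by
  rintro w hw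
  obtain ⟨s, hts, hws⟩ := id hw
  have hxw : x ≠ w := by
    rintro rfl
    exact hx.2 (U.mem_bag_of_mem_subtreeSet_of_mem_tailSet hx.1 hw)
  obtain ⟨r, hrt, hxr⟩ := hx.1
  exact (U.adj_of_mem_bag_of_mem_subtreeSet hws ⟨r, hrt.trans hts, hxr⟩ hxw).symm

theorem mem_tailSet_of_adj {t : U.ι} {x w : V} (hx : x ∈ U.subtreeSet t)
    (hw : w ∉ U.subtreeSet t) (hxw : G.Adj x w) : w ∈ U.tailSet t := by
  obtain ⟨r, hrt, hxr⟩ := hx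
  obtain ⟨s, hws⟩ := U.bag_cover w
  have hst : ¬ s ≤ t := fun hst => hw ⟨s, hst, hws⟩
  rcases U.adj_comparable x w s r hxw hxr hws with hsr | hrs
  · exact absurd (hsr.trans hrt) hst
  · rcases U.up_chain r s t hrs hrt with hst' | hts
    · exact absurd hst' hst
    · exact ⟨s, hts, hws⟩

end UCD

theorem ucd_nonleaf_tail_eq_inter_neighborSets_general {V : Type u} (G : SimpleGraph V)
    (U : UCD G) (t : U.ι) (u v : V)
    (hu : u ∈ U.subtreeSet t \ U.bag t) (hv : v ∈ U.subtreeSet t \ U.bag t)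
    (hcomp : (G.induce (U.subtreeSet t \ U.bag t)).connectedComponentMk ⟨u, hu⟩ ≠
             (G.induce (U.subtreeSet t \ U.bag t)).connectedComponentMk ⟨v, hv⟩) :
    U.tailSet t = G.neighborSet u ∩ G.neighborSet v := by
  refine subset_antisymm
    (Set.subset_inter (U.tailSet_subset_neighborSet hu) (U.tailSet_subset_neighborSet hv)) ?_
  rintro w ⟨huw, hvw⟩
  by_cases hwD : w ∈ U.subtreeSet t
  · by_cases hwB : w ∈ U.bag t
    · exact ⟨t, le_rfl, hwB⟩
    have hw : w ∈ U.subtreeSet t \ U.bag t := ⟨hwD, hwB⟩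
    have huw' : (G.induce (U.subtreeSet t \ U.bag t)).Adj ⟨u, hu⟩ ⟨w, hw⟩ := huw
    have hwv' : (G.induce (U.subtreeSet t \ U.bag t)).Adj ⟨w, hw⟩ ⟨v, hv⟩ := G.adj_symm hvw
    exact absurd (ConnectedComponent.sound (huw'.reachable.trans hwv'.reachable)) hcomp
  · exact U.mem_tailSet_of_adj hu.1 hwD huw

/-- For a non-leaf block `(B, D)` with tail `Q` of the universal clique decomposition of a
connected trivially perfect graph, and any two vertices `u`, `v` in different connected
components of `G[D \ B]`, one has `Q = N_G(u) ∩ N_G(v)`. -/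
theorem ucd_nonleaf_tail_eq_inter_neighborSets {V : Type u} [Fintype V] (G : SimpleGraph V)
    (hG : G.Connected) (hTP : TriviallyPerfect G) (U : UCD G) (t : U.ι)
    (hleaf : ¬ U.IsLeaf t) (u v : V)
    (hu : u ∈ U.subtreeSet t \ U.bag t) (hv : v ∈ U.subtreeSet t \ U.bag t)
    (hcomp : (G.induce (U.subtreeSet t \ U.bag t)).connectedComponentMk ⟨u, hu⟩ ≠
             (G.induce (U.subtreeSet t \ U.bag t)).connectedComponentMk ⟨v, hv⟩) :
    U.tailSet t = G.neighborSet u ∩ G.neighborSet v :=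
  ucd_nonleaf_tail_eq_inter_neighborSets_general G U t u v hu hv hcomp
end

section
/- Let G be a connected graph, S a minimal trivially perfect completion of G, H = G+S, and let L = (B, D) be a block of the universal clique decomposition of H. Let D_1, …, D_ℓ be the connected components of H[D] − B. Then for every i ∈ {1, …, ℓ}, the induced subgraph G[D_i] of the original graph G is connected. -/
open SimpleGraph

universe u

/-!
Let `D` be a component of `H[D_t] - B_t`. A vertex outside `D` with a neighbour in `D` lies in a
bag on the path from `t` to the root, so it is adjacent to all of `D`, and such vertices form a
clique. If `G[D]` split into parts `X` and `Y` with no `G`-edges between them, deleting the fill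
edges between `X` and `Y` would keep `H` trivially perfect: an induced `C₄` or `P₄` that uses a
deleted pair meets both `X` and `Y`, and the finitely many ways four vertices can sit relative to
`X`, `Y` and that clique all fail. As `D` is connected in `H`, at least one fill edge joins `X`
and `Y`, contradicting the minimality of `S`.
-/

variable {V : Type u}

def crossEdges (X Y : Set V) : Set (Sym2 V) := Set.image2 (fun x y => s(x, y)) X Y

@[simp]
lemma mem_crossEdges {X Y : Set V} {v w : V} :
    s(v, w) ∈ crossEdges X Y ↔ v ∈ X ∧ w ∈ Y ∨ v ∈ Y ∧ w ∈ X := by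
  simp only [crossEdges, Set.mem_image2, Sym2.eq_iff]
  constructor
  · rintro ⟨x, hx, y, hy, ⟨rfl, rfl⟩ | ⟨rfl, rfl⟩⟩
    exacts [Or.inl ⟨hx, hy⟩, Or.inr ⟨hy, hx⟩]
  · rintro (⟨hv, hw⟩ | ⟨hv, hw⟩)
    exacts [⟨v, hv, w, hw, Or.inl ⟨rfl, rfl⟩⟩, ⟨w, hw, v, hv, Or.inr ⟨rfl, rfl⟩⟩]

lemma deleteEdges_crossEdges_adj_of_notMem {H : SimpleGraph V} {X Y : Set V} {v w : V}
    (hv : v ∉ X ∪ Y) : (H.deleteEdges (crossEdges X Y)).Adj v w ↔ H.Adj v w := by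
  simp only [Set.mem_union, not_or] at hv
  simp [hv.1, hv.2]

lemma completes_sdiff {G : SimpleGraph V} {S E : Set (Sym2 V)} (hE : Disjoint E G.edgeSet) :
    completes G (S \ E) = (completes G S).deleteEdges E := by
  ext v w
  have hG : G.Adj v w → s(v, w) ∉ E := fun h hE' => hE.ne_of_mem hE' h rfl
  simp only [completes, deleteEdges_adj, sup_adj, fromEdgeSet_adj, Set.mem_sdiff]
  tauto

def SimpleGraph.Embedding.ofDeleteEdges {W : Type*} {F : SimpleGraph W} {H : SimpleGraph V}
    {E : Set (Sym2 V)} (f : F ↪g H.deleteEdges E) (hf : ∀ i j, s(f i, f j) ∉ E) : F ↪g H where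
  toEmbedding := f.toEmbedding
  map_rel_iff' {i j} := by
    rw [← f.map_adj_iff, deleteEdges_adj]
    exact ⟨fun h => ⟨h, hf i j⟩, And.left⟩

section CrossSplit

/-- The shape an induced copy of `F` in `H.deleteEdges (crossEdges X Y)` must have when it meets
`X` in `A` and `Y` in `B`, provided the neighbours of `X ∪ Y` outside it form a clique complete
to `X ∪ Y`. -/
def IsCrossSplit {W : Type*} [DecidableEq W] (F : SimpleGraph W) (A B : Finset W) : Prop :=
  A.Nonempty ∧ B.Nonempty ∧ Disjoint A B ∧
  (∀ i ∈ A, ∀ j ∈ B, ¬ F.Adj i j) ∧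
  (∀ i ∉ A ∪ B, ∀ j ∈ A ∪ B, F.Adj i j → ∀ k ∈ A ∪ B, F.Adj i k) ∧
  (∀ i ∉ A ∪ B, ∀ j ∉ A ∪ B, ∀ k ∈ A ∪ B, ∀ l ∈ A ∪ B,
    F.Adj i k → F.Adj j l → i ≠ j → F.Adj i j)

set_option synthInstance.maxSize 1000 in
instance {W : Type*} [Fintype W] [DecidableEq W] (F : SimpleGraph W) [DecidableRel F.Adj]
    (A B : Finset W) : Decidable (IsCrossSplit F A B) := by
  unfold IsCrossSplit; infer_instance

instance : DecidableRel (pathGraph 4).Adj :=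
  fun _ _ => decidable_of_iff _ pathGraph_adj.symm

lemma not_isCrossSplit_cycleGraph_four (A B : Finset (Fin 4)) :
    ¬ IsCrossSplit (cycleGraph 4) A B := by
  revert A B; decide

lemma not_isCrossSplit_pathGraph_four (A B : Finset (Fin 4)) :
    ¬ IsCrossSplit (pathGraph 4) A B := by
  revert A B; decide

variable {W : Type*} [Fintype W] [DecidableEq W] {F : SimpleGraph W} {H : SimpleGraph V}
  {X Y : Set V}

open Classical in
lemma exists_isCrossSplit_of_embedding (hXY : Disjoint X Y)
    (hnbr : ∀ w ∉ X ∪ Y, ∀ a ∈ X ∪ Y, H.Adj w a → ∀ v ∈ X ∪ Y, H.Adj w v)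
    (hclique : H.IsClique {w | w ∉ X ∪ Y ∧ ∃ a ∈ X ∪ Y, H.Adj w a})
    (f : F ↪g H.deleteEdges (crossEdges X Y)) (hX : ∃ i, f i ∈ X) (hY : ∃ i, f i ∈ Y) :
    ∃ A B, IsCrossSplit F A B := by
  set A : Finset W := Finset.univ.filter (f · ∈ X)
  set B : Finset W := Finset.univ.filter (f · ∈ Y)
  have hmem : ∀ i, i ∈ A ∪ B ↔ f i ∈ X ∪ Y := by simp [A, B]
  have hadj : ∀ {i j}, f i ∉ X ∪ Y → (F.Adj i j ↔ H.Adj (f i) (f j)) := fun hi => by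
    rw [← f.map_adj_iff, deleteEdges_crossEdges_adj_of_notMem hi]
  obtain ⟨i, hi⟩ := hX
  obtain ⟨j, hj⟩ := hY
  refine ⟨A, B, ⟨i, by simpa [A]⟩, ⟨j, by simpa [B]⟩, ?_, ?_, ?_, ?_⟩
  · exact Finset.disjoint_filter.mpr fun k _ hk => hXY.notMem_of_mem_left hk
  · intro i hi j hj hij
    simp only [A, B, Finset.mem_filter, Finset.mem_univ, true_and] at hi hj
    simpa [hi, hj] using f.map_adj_iff.mpr hij
  · intro i hi j hj hij k hk
    rw [hmem] at hi hj hk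
    exact (hadj hi).mpr (hnbr _ hi _ hj ((hadj hi).mp hij) _ hk)
  · intro i hi j hj k hk l hl hik hjl hij
    rw [hmem] at hi hj hk hl
    exact (hadj hi).mpr (hclique ⟨hi, _, hk, (hadj hi).mp hik⟩ ⟨hj, _, hl, (hadj hj).mp hjl⟩
      (f.injective.ne hij))

lemma isEmpty_embedding_deleteEdges_crossEdges (hXY : Disjoint X Y)
    (hnbr : ∀ w ∉ X ∪ Y, ∀ a ∈ X ∪ Y, H.Adj w a → ∀ v ∈ X ∪ Y, H.Adj w v)
    (hclique : H.IsClique {w | w ∉ X ∪ Y ∧ ∃ a ∈ X ∪ Y, H.Adj w a})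
    (hF : ∀ A B, ¬ IsCrossSplit F A B) (hH : IsEmpty (F ↪g H)) :
    IsEmpty (F ↪g H.deleteEdges (crossEdges X Y)) := by
  refine ⟨fun f => ?_⟩
  by_cases hXY' : (∃ i, f i ∈ X) ∧ ∃ i, f i ∈ Y
  · obtain ⟨A, B, h⟩ := exists_isCrossSplit_of_embedding hXY hnbr hclique f hXY'.1 hXY'.2
    exact hF A B h
  · refine hH.false (f.ofDeleteEdges fun i j hij => hXY' ?_)
    rw [mem_crossEdges] at hij
    rcases hij with ⟨hi, hj⟩ | ⟨hi, hj⟩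
    exacts [⟨⟨i, hi⟩, ⟨j, hj⟩⟩, ⟨⟨j, hj⟩, ⟨i, hi⟩⟩]

lemma TriviallyPerfect.deleteEdges_crossEdges (hH : TriviallyPerfect H) (hXY : Disjoint X Y)
    (hnbr : ∀ w ∉ X ∪ Y, ∀ a ∈ X ∪ Y, H.Adj w a → ∀ v ∈ X ∪ Y, H.Adj w v)
    (hclique : H.IsClique {w | w ∉ X ∪ Y ∧ ∃ a ∈ X ∪ Y, H.Adj w a}) :
    TriviallyPerfect (H.deleteEdges (crossEdges X Y)) :=
  ⟨isEmpty_embedding_deleteEdges_crossEdges hXY hnbr hclique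
      not_isCrossSplit_cycleGraph_four hH.1,
    isEmpty_embedding_deleteEdges_crossEdges hXY hnbr hclique
      not_isCrossSplit_pathGraph_four hH.2⟩

end CrossSplit

namespace SimpleGraph

variable {G : SimpleGraph V}

lemma exists_not_adj_of_not_preconnected_induce {D : Set V} (h : ¬ (G.induce D).Preconnected) :
    ∃ X ⊆ D, X.Nonempty ∧ (D \ X).Nonempty ∧ ∀ x ∈ X, ∀ y ∈ D \ X, ¬ G.Adj x y := by
  obtain ⟨u, v, huv⟩ : ∃ u v, ¬ (G.induce D).Reachable u v := by
    simpa [Preconnected] using h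
  set c := (G.induce D).connectedComponentMk u
  refine ⟨Subtype.val '' c.supp, by simp, ⟨u, u, rfl, rfl⟩, ⟨v, v.2, ?_⟩, ?_⟩
  · rintro ⟨v', hv', hvv'⟩
    rw [Subtype.val_injective hvv'] at hv'
    exact huv (ConnectedComponent.exact hv').symm
  · rintro _ ⟨x, hx, rfl⟩ y ⟨hyD, hyX⟩ hxy
    exact hyX ⟨⟨y, hyD⟩, c.mem_supp_of_adj_mem_supp hx (by exact hxy), rfl⟩

namespace ConnectedComponent

variable {A : Set V} (c : (G.induce A).ConnectedComponent)

lemma mem_image_supp_of_adj {x y : V} (hx : x ∈ Subtype.val '' c.supp) (hy : y ∈ A)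
    (hxy : G.Adj x y) : y ∈ Subtype.val '' c.supp := by
  obtain ⟨x, hx, rfl⟩ := hx
  exact ⟨⟨y, hy⟩, c.mem_supp_of_adj_mem_supp hx (by exact hxy), rfl⟩

lemma exists_adj_of_subset_image_supp {X : Set V} (hX : X ⊆ Subtype.val '' c.supp)
    (hXne : X.Nonempty) (hYne : (Subtype.val '' c.supp \ X).Nonempty) :
    ∃ x ∈ X, ∃ y ∈ Subtype.val '' c.supp \ X, G.Adj x y := by
  obtain ⟨_, ⟨p, hp, rfl⟩, hpX⟩ := hYne
  obtain ⟨_, hqX⟩ := hXne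
  obtain ⟨q, hq, rfl⟩ := hX hqX
  obtain ⟨w⟩ := ConnectedComponent.exact (hq.trans hp.symm)
  obtain ⟨d, -, hdX, hdY⟩ := w.exists_boundary_dart {r | r.1 ∈ X} hqX hpX
  have hd : d.fst ∈ c.supp := by
    obtain ⟨r, hr, hrd⟩ := hX hdX
    rwa [← Subtype.val_injective hrd]
  exact ⟨_, hdX, _, ⟨⟨_, c.mem_supp_of_adj_mem_supp hd d.adj, rfl⟩, hdY⟩, d.adj⟩

end ConnectedComponent

end SimpleGraph

namespace UCD

variable {H : SimpleGraph V} (U : UCD H)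

lemma subtreeSet_mono {s t : U.ι} (hst : s ≤ t) : U.subtreeSet s ⊆ U.subtreeSet t :=
  fun _ ⟨r, hrs, hv⟩ => ⟨r, hrs.trans hst, hv⟩

lemma adj_of_mem_bag_of_mem_subtreeSet_s7 {s : U.ι} {w v : V} (hw : w ∈ U.bag s)
    (hv : v ∈ U.subtreeSet s) (hvw : v ≠ w) : H.Adj w v := by
  rw [U.bag_eq_universal s] at hw
  exact hw.2 v hv hvw

lemma adj_of_mem_tailSet_of_mem_subtreeSet {t : U.ι} {w v : V} (hw : w ∈ U.tailSet t)
    (hv : v ∈ U.subtreeSet t) (hvw : v ≠ w) : H.Adj w v :=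
  have ⟨_, hts, hws⟩ := hw
  U.adj_of_mem_bag_of_mem_subtreeSet_s7 hws (U.subtreeSet_mono hts hv) hvw

lemma isClique_tailSet (t : U.ι) : H.IsClique (U.tailSet t) := by
  rintro w₁ ⟨s₁, hts₁, hw₁⟩ w₂ ⟨s₂, hts₂, hw₂⟩ hne
  rcases U.up_chain t s₁ s₂ hts₁ hts₂ with h | h
  · exact (U.adj_of_mem_bag_of_mem_subtreeSet_s7 hw₂ ⟨s₁, h, hw₁⟩ hne).symm
  · exact U.adj_of_mem_bag_of_mem_subtreeSet_s7 hw₁ ⟨s₂, h, hw₂⟩ hne.symm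

lemma mem_subtreeSet_or_mem_tailSet_of_adj {t : U.ι} {w a : V} (ha : a ∈ U.subtreeSet t)
    (hwa : H.Adj w a) : w ∈ U.subtreeSet t ∨ w ∈ U.tailSet t := by
  obtain ⟨sa, hsa, ha⟩ := ha
  obtain ⟨sw, hw⟩ := U.bag_cover w
  by_cases hswt : sw ≤ t
  · exact Or.inl ⟨sw, hswt, hw⟩
  · rcases U.adj_comparable w a sa sw hwa hw ha with h | h
    · exact Or.inr ⟨sw, (U.up_chain sa t sw hsa h).resolve_right hswt, hw⟩
    · exact absurd (h.trans hsa) hswt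

lemma mem_tailSet_of_adj_component {t : U.ι}
    (c : (H.induce (U.subtreeSet t \ U.bag t)).ConnectedComponent) {w a : V}
    (hw : w ∉ Subtype.val '' c.supp) (ha : a ∈ Subtype.val '' c.supp) (hwa : H.Adj w a) :
    w ∈ U.tailSet t := by
  obtain ⟨a, ha, rfl⟩ := ha
  rcases U.mem_subtreeSet_or_mem_tailSet_of_adj a.2.1 hwa with hsub | htail
  · by_contra hnt
    have hwB : w ∉ U.bag t := fun hB => hnt ⟨t, le_rfl, hB⟩
    exact hw (c.mem_image_supp_of_adj ⟨a, ha, rfl⟩ ⟨hsub, hwB⟩ hwa.symm)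
  · exact htail

end UCD

theorem minTPCompletion_block_components_connected_in_G_general {V : Type u}
    (G : SimpleGraph V) (S : Set (Sym2 V)) (hS : IsMinTPCompletion G S)
    (U : UCD (completes G S)) (t : U.ι)
    (c : ((completes G S).induce (U.subtreeSet t \ U.bag t)).ConnectedComponent) :
    (G.induce (Subtype.val '' c.supp)).Connected := by
  obtain ⟨-, hTP, hmin⟩ := hS
  set D := Subtype.val '' c.supp
  refine (connected_iff _).mpr ⟨?_, (c.nonempty_supp.image _).to_subtype⟩
  by_contra hpre
  obtain ⟨X, hXD, hXne, hYne, hGXY⟩ := exists_not_adj_of_not_preconnected_induce hpre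
  obtain ⟨x, hx, y, hy, hxy⟩ := c.exists_adj_of_subset_image_supp hXD hXne hYne
  have hG : Disjoint (crossEdges X (D \ X)) G.edgeSet := by
    refine Set.disjoint_left.mpr fun e he => ?_
    induction e using Sym2.ind with | _ a b => ?_
    rcases mem_crossEdges.mp he with ⟨ha, hb⟩ | ⟨ha, hb⟩
    exacts [hGXY a ha b hb, fun hab => hGXY b hb a ha hab.symm]
  have hxyS : s(x, y) ∈ S := by
    simp only [completes, sup_adj, fromEdgeSet_adj] at hxy
    exact hxy.resolve_left (hGXY x hx y hy) |>.1
  have hxyE : s(x, y) ∈ crossEdges X (D \ X) := mem_crossEdges.mpr (.inl ⟨hx, hy⟩)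
  refine hmin _ (Set.sdiff_ssubset_left_iff.mpr ⟨s(x, y), hxyS, hxyE⟩) ?_
  rw [completes_sdiff hG]
  have htail {w a : V} (hw : w ∉ D) (ha : a ∈ D) (hwa : (completes G S).Adj w a) :
      w ∈ U.tailSet t := U.mem_tailSet_of_adj_component c hw ha hwa
  refine hTP.deleteEdges_crossEdges Set.disjoint_sdiff_right ?_ ?_ <;>
    rw [Set.union_sdiff_cancel hXD]
  · rintro w hw a ha hwa _ ⟨v, hv, rfl⟩
    exact U.adj_of_mem_tailSet_of_mem_subtreeSet (htail hw ha hwa) v.2.1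
      fun h => hw (h ▸ ⟨v, hv, rfl⟩)
  · exact (U.isClique_tailSet t).subset fun w ⟨hw, a, ha, hwa⟩ => htail hw ha hwa

/-- Let `H = G + S` be a minimal trivially perfect completion of a connected graph `G`, and
`(B, D)` a block of the universal clique decomposition of `H`.  Then for every connected
component `Dᵢ` of `H[D] - B`, the induced subgraph `G[Dᵢ]` of the original graph is
connected. -/
theorem minTPCompletion_block_components_connected_in_G {V : Type u} [Fintype V]
    (G : SimpleGraph V) (hG : G.Connected) (S : Set (Sym2 V)) (hS : IsMinTPCompletion G S)
    (U : UCD (completes G S)) (t : U.ι)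
    (c : ((completes G S).induce (U.subtreeSet t \ U.bag t)).ConnectedComponent) :
    (G.induce (Subtype.val '' c.supp)).Connected :=
  minTPCompletion_block_components_connected_in_G_general G S hS U t c
end

section
/- Let G be a connected graph, k a nonnegative integer, and S a minimal trivially perfect completion of G with |S| ≤ k; let H = G+S, and let L = (B, D) be the root block of the universal clique decomposition of H. If H is not a complete graph, then: (i) the tail of L equals B; (ii) B = Ω₁ ∩ Ω₂ for some vital potential maximal cliques Ω₁, Ω₂ of (G,k); and (iii) D = V(G). -/
open SimpleGraph

universe u

namespace UCD

variable {V : Type u} {G : SimpleGraph V} (U : UCD G)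

lemma bag_top_eq : U.bag ⊤ = {v | ∀ w, w ≠ v → G.Adj v w} := by
  rw [U.bag_eq_universal ⊤]
  ext v
  refine ⟨fun ⟨_, h⟩ w hw => ?_, fun h => ⟨?_, fun w _ hw => h w hw⟩⟩
  · obtain ⟨s, hs⟩ := U.bag_cover w
    exact h w ⟨s, le_top, hs⟩ hw
  · obtain ⟨s, hs⟩ := U.bag_cover v
    exact ⟨s, le_top, hs⟩

lemma tailSet_top : U.tailSet ⊤ = U.bag ⊤ := by
  ext v
  refine ⟨fun ⟨s, hs, hv⟩ => ?_, fun hv => ⟨⊤, le_rfl, hv⟩⟩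
  rwa [top_le_iff.mp hs] at hv

lemma subtreeSet_top : U.subtreeSet ⊤ = Set.univ :=
  Set.eq_univ_of_forall fun v =>
    let ⟨s, hs⟩ := U.bag_cover v
    ⟨s, le_top, hs⟩

lemma adj_of_le {r s : U.ι} {v w : V} (hsr : s ≤ r) (hv : v ∈ U.bag r) (hw : w ∈ U.bag s)
    (hwv : w ≠ v) : G.Adj v w := by
  rw [U.bag_eq_universal r] at hv
  exact hv.2 w ⟨s, hsr, hw⟩ hwv

lemma not_le_of_not_adj {r s : U.ι} {v w : V} (hv : v ∈ U.bag r) (hw : w ∈ U.bag s)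
    (hwv : w ≠ v) (hvw : ¬ G.Adj v w) : ¬ s ≤ r :=
  fun hsr => hvw (U.adj_of_le hsr hv hw hwv)

lemma isClique_insert_bag_top (z : V) : G.IsClique (insert z (U.bag ⊤)) := by
  refine IsClique.insert (fun a ha b hb hab => ?_) fun b hb hzb => ?_
  · rw [bag_top_eq] at ha
    exact ha b hab.symm
  · rw [bag_top_eq] at hb
    exact (hb z hzb).symm

lemma exists_ne_top_of_ne_top (hG : G ≠ ⊤) : ∃ s : U.ι, s ≠ ⊤ := by
  obtain ⟨x, y, hxy, hn⟩ : ∃ x y, x ≠ y ∧ ¬ G.Adj x y := by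
    by_contra! h
    exact hG (SimpleGraph.ext (funext₂ fun x y => propext ⟨Adj.ne, h x y⟩))
  obtain ⟨s, hs⟩ := U.bag_cover x
  refine ⟨s, fun hstop => hn ?_⟩
  rw [hstop, bag_top_eq] at hs
  exact hs y hxy.symm

/-- `Maximal (· ≠ ⊤) s₁` says `s₁` is a child of the root. A node below `s₁` and comparable with
`s₂` would put `s₁` and `s₂` on one chain. -/
lemma eq_top_of_comparable {s₁ s₂ r : U.ι} (hs₁ : Maximal (· ≠ ⊤) s₁)
    (h₂₁ : ¬ s₂ ≤ s₁) (h₁₂ : ¬ s₁ ≤ s₂) (hr₁ : s₁ ≤ r ∨ r ≤ s₁) (hr₂ : s₂ ≤ r ∨ r ≤ s₂) :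
    r = ⊤ := by
  have hs₁r : s₁ ≤ r := by
    refine hr₁.resolve_right fun hrs₁ => ?_
    rcases hr₂ with hs₂r | hrs₂
    · exact h₂₁ (hs₂r.trans hrs₁)
    · exact (U.up_chain r s₁ s₂ hrs₁ hrs₂).elim h₁₂ h₂₁
  by_contra hr
  have hrs₁ : r ≤ s₁ := hs₁.2 hr hs₁r
  rcases hr₂ with hs₂r | hrs₂
  · exact h₂₁ (hs₂r.trans hrs₁)
  · exact h₁₂ (hs₁r.trans hrs₂)

/-- Take `x` in a child of the root, a non-neighbour `y` of `x`, and maximal cliques extending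
`insert x (U.bag ⊤)` and `insert y (U.bag ⊤)`; a common vertex is adjacent to both `x` and `y`,
so its node is the root. -/
lemma exists_maximal_isClique_inter_eq_bag_top [Finite V] (hG : G ≠ ⊤) :
    ∃ Ω₁ Ω₂ : Set V, Maximal G.IsClique Ω₁ ∧ Maximal G.IsClique Ω₂ ∧ U.bag ⊤ = Ω₁ ∩ Ω₂ := by
  obtain ⟨s, hs⟩ := U.exists_ne_top_of_ne_top hG
  obtain ⟨s₁, -, hs₁⟩ := Finite.exists_le_maximal (p := (· ≠ ⊤)) hs
  obtain ⟨x, hx⟩ := U.bag_nonempty s₁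
  obtain ⟨y, hyx, hxy⟩ : ∃ y, y ≠ x ∧ ¬ G.Adj x y := by
    have hxB : x ∉ U.bag ⊤ := Set.disjoint_left.mp (U.bag_disjoint s₁ ⊤ hs₁.1) hx
    rw [bag_top_eq] at hxB
    simpa using hxB
  obtain ⟨s₂, hy⟩ := U.bag_cover y
  have h₂₁ := U.not_le_of_not_adj hx hy hyx hxy
  have h₁₂ := U.not_le_of_not_adj hy hx hyx.symm fun h => hxy h.symm
  obtain ⟨Ω₁, hBΩ₁, hΩ₁⟩ := Finite.exists_le_maximal (U.isClique_insert_bag_top x)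
  obtain ⟨Ω₂, hBΩ₂, hΩ₂⟩ := Finite.exists_le_maximal (U.isClique_insert_bag_top y)
  have hxΩ₁ : x ∈ Ω₁ := hBΩ₁ (Set.mem_insert _ _)
  have hyΩ₂ : y ∈ Ω₂ := hBΩ₂ (Set.mem_insert _ _)
  refine ⟨Ω₁, Ω₂, hΩ₁, hΩ₂, Set.Subset.antisymm
    (fun v hv => ⟨hBΩ₁ (Set.mem_insert_of_mem _ hv), hBΩ₂ (Set.mem_insert_of_mem _ hv)⟩) ?_⟩
  rintro v ⟨hv₁, hv₂⟩
  have hvx : v ≠ x := by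
    rintro rfl
    exact hxy (hΩ₂.1 hv₂ hyΩ₂ hyx.symm)
  have hvy : v ≠ y := by
    rintro rfl
    exact hxy (hΩ₁.1 hxΩ₁ hv₁ hyx.symm)
  obtain ⟨r, hr⟩ := U.bag_cover v
  have hrtop : r = ⊤ := U.eq_top_of_comparable hs₁ h₂₁ h₁₂
    (U.adj_comparable v x s₁ r (hΩ₁.1 hv₁ hxΩ₁ hvx) hr hx)
    (U.adj_comparable v y s₂ r (hΩ₂.1 hv₂ hyΩ₂ hvy) hr hy)
  rwa [hrtop] at hr

end UCD

theorem minTPCompletion_root_block_structure_general {V : Type u} [Fintype V]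
    (G : SimpleGraph V) (k : ℕ)
    (S : Set (Sym2 V)) (hS : IsMinTPCompletion G S) (hcard : S.ncard ≤ k)
    (hne : completes G S ≠ ⊤)
    (U : UCD (completes G S)) (t : U.ι) (hroot : t = ⊤) :
    U.tailSet t = U.bag t ∧
    (∃ Ω₁ Ω₂ : Set V, VitalPMC G k Ω₁ ∧ VitalPMC G k Ω₂ ∧ U.bag t = Ω₁ ∩ Ω₂) ∧
    U.subtreeSet t = Set.univ := by
  subst hroot
  obtain ⟨Ω₁, Ω₂, hΩ₁, hΩ₂, hB⟩ := U.exists_maximal_isClique_inter_eq_bag_top hne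
  exact ⟨U.tailSet_top, ⟨Ω₁, Ω₂, ⟨S, hS, hcard, hΩ₁⟩, ⟨S, hS, hcard, hΩ₂⟩, hB⟩, U.subtreeSet_top⟩

/-- Structure of the root block `(B, D)` of the universal clique decomposition of a minimal
trivially perfect completion `H = G + S` with `|S| ≤ k`, when `H` is not complete:
the tail equals `B`; `B = Ω₁ ∩ Ω₂` for vital potential maximal cliques `Ω₁`, `Ω₂`;
and `D = V(G)`. -/
theorem minTPCompletion_root_block_structure {V : Type u} [Fintype V]
    (G : SimpleGraph V) (hG : G.Connected) (k : ℕ)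
    (S : Set (Sym2 V)) (hS : IsMinTPCompletion G S) (hcard : S.ncard ≤ k)
    (hne : completes G S ≠ ⊤)
    (U : UCD (completes G S)) (t : U.ι) (hroot : t = ⊤) :
    U.tailSet t = U.bag t ∧
    (∃ Ω₁ Ω₂ : Set V, VitalPMC G k Ω₁ ∧ VitalPMC G k Ω₂ ∧ U.bag t = Ω₁ ∩ Ω₂) ∧
    U.subtreeSet t = Set.univ :=
  minTPCompletion_root_block_structure_general G k S hS hcard hne U t hroot
end

section
/- Let G be a graph, k a nonnegative integer, and X ⊆ V(G) with |X| = 5 such that the graph induced by G on X is a subgraph of some 5-cycle on the vertex set X. Let k' = k + |E(G[X])| − 5, and let G' be the graph obtained from G by (a) adding all missing edges inside X (so that X becomes a clique), (b) adding a set A of k+2 new vertices, and (c) adding all edges between A and N_G[X] (the closed neighborhood of X in G). Suppose S is a minimal split completion of G' with |S| ≤ k', and let (C, I) be an I-maximal split partition of G'+S. Then: (i) N_G[X] ⊆ C; (ii) A ⊆ I; (iii) no pair in S has an endpoint in A; (iv) in G'+S every vertex of C \ X is adjacent to every vertex of X; and (v) in G'+S no vertex of I \ A is adjacent to any vertex of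 X. -/
open SimpleGraph

universe u

/-- `(C, I)` is a split partition of `G`: `C` is a clique, `I` an independent set, and they
partition the vertex set. -/
def IsSplitPartition {V : Type u} (G : SimpleGraph V) (C I : Set V) : Prop :=
  Disjoint C I ∧ C ∪ I = Set.univ ∧ G.IsClique C ∧ ∀ v ∈ I, ∀ w ∈ I, ¬ G.Adj v w

/-- A split partition `(C, I)` is `I`-maximal if no vertex can be moved from `C` to `I`. -/
def IsIMaximalSplitPartition {V : Type u} (G : SimpleGraph V) (C I : Set V) : Prop :=
  IsSplitPartition G C I ∧ ∀ v ∈ C, ¬ IsSplitPartition G (C \ {v}) (I ∪ {v})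

/-- `S` is a minimal split completion of `G`. -/
def IsMinSplitCompletion {V : Type u} (G : SimpleGraph V) (S : Set (Sym2 V)) : Prop :=
  IsCompletionSet G S ∧ (∃ C I, IsSplitPartition (completes G S) C I) ∧
    ∀ S' ⊂ S, ¬ ∃ C I, IsSplitPartition (completes G S') C I

/-- The closed neighborhood `N_G[X]` of a set of vertices `X`. -/
def closedNbhd {V : Type u} (G : SimpleGraph V) (X : Set V) : Set V :=
  X ∪ {v | ∃ x ∈ X, G.Adj v x}

/-- `G[X]` is a subgraph of some 5-cycle on the vertex set `X`. -/
def SubCycle5 {V : Type u} (G : SimpleGraph V) (X : Set V) : Prop :=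
  ∃ f : Fin 5 → V, Function.Injective f ∧ Set.range f = X ∧
    ∀ i j : Fin 5, G.Adj (f i) (f j) → (SimpleGraph.cycleGraph 5).Adj i j

/-- The number of edges of `G` inside the set `X`. -/
noncomputable def edgesInside {V : Type u} (G : SimpleGraph V) (X : Set V) : ℕ :=
  {e ∈ G.edgeSet | ∀ v ∈ e, v ∈ X}.ncard

/-- The auxiliary graph `G'` of the pseudosplit-completion algorithm: obtained from `G` by
turning `X` into a clique, adding `k + 2` new vertices, and joining each new vertex to all
of `N_G[X]`. -/
def auxGraph {V : Type u} (G : SimpleGraph V) (X : Set V) (k : ℕ) :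
    SimpleGraph (V ⊕ Fin (k + 2)) :=
  SimpleGraph.fromRel (fun u w =>
    match u, w with
    | Sum.inl v, Sum.inl v' => G.Adj v v' ∨ (v ∈ X ∧ v' ∈ X)
    | Sum.inl v, Sum.inr _ => v ∈ closedNbhd G X
    | Sum.inr _, Sum.inl v => v ∈ closedNbhd G X
    | Sum.inr _, Sum.inr _ => False)

/-!
Some new vertex `a` lies in `I`: otherwise the `k + 2` pairwise non-adjacent new vertices
would all be in the clique `C`, and `S` would have to contain the `k + 1` pairs joining one of
them to the others, although `|S| ≤ k` since `G[X]` has at most five edges. As `a` is adjacent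
to all of `N_G[X]`, this forces `N_G[X] ⊆ C`. Then every neighbour in `G'` of a new vertex lies
in `C`, so moving all new vertices to the independent side and discarding the pairs of `S` at
them still gives a split graph: by minimality `S` has no such pairs. Now the new vertices have
no neighbour in `I`, so `I`-maximality puts them in `I`. Finally, minimality of `S` forces every
pair of `S` into `C`, so a vertex of `I` outside `N_G[X]` gains no edge to `X`.
-/

section Completion

variable {V : Type u} {G : SimpleGraph V} {S : Set (Sym2 V)} {C I : Set V}

lemma completes_adj {u w : V} :
    (completes G S).Adj u w ↔ G.Adj u w ∨ (s(u, w) ∈ S ∧ u ≠ w) := by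
  simp [completes, fromEdgeSet_adj]

lemma completes_mono {T : Set (Sym2 V)} (h : T ⊆ S) : completes G T ≤ completes G S :=
  sup_le_sup_left (fromEdgeSet_mono h) G

lemma ncard_le_ncard_of_isClique_completes (hS : S.Finite)
    (hC : (completes G S).IsClique C) {a : V} {B : Set V} (ha : a ∈ C) (hB : B ⊆ C)
    (haB : a ∉ B) (hnadj : ∀ b ∈ B, ¬ G.Adj a b) : B.ncard ≤ S.ncard := by
  refine Set.ncard_le_ncard_of_injOn (fun b => s(a, b)) (fun b hb => ?_)
    (fun b _ b' _ h => Sym2.congr_right.mp h) hS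
  have hab : a ≠ b := fun h => haB (h ▸ hb)
  exact ((completes_adj.mp (hC ha (hB hb) hab)).resolve_left (hnadj b hb)).1

end Completion

namespace IsSplitPartition

variable {V : Type u} {H : SimpleGraph V} {C I : Set V}

lemma mem_or_mem (hP : IsSplitPartition H C I) (x : V) : x ∈ C ∨ x ∈ I := by
  have hx : x ∈ C ∪ I := hP.2.1 ▸ Set.mem_univ x
  exact hx

lemma notMem_right (hP : IsSplitPartition H C I) {x : V} (hx : x ∈ C) : x ∉ I :=
  Set.disjoint_left.mp hP.1 hx

lemma mem_left_of_adj (hP : IsSplitPartition H C I) {v w : V} (hadj : H.Adj v w)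
    (hw : w ∈ I) : v ∈ C :=
  (hP.mem_or_mem v).resolve_right fun hv => hP.2.2.2 v hv w hw hadj

variable {G : SimpleGraph V} {S : Set (Sym2 V)}

lemma completes_sep_subset_left (hP : IsSplitPartition (completes G S) C I) :
    IsSplitPartition (completes G {e ∈ S | ∀ v ∈ e, v ∈ C}) C I := by
  refine ⟨hP.1, hP.2.1, fun u hu w hw huw => ?_, fun u hu w hw hadj =>
    hP.2.2.2 u hu w hw (completes_mono (Set.sep_subset _ _) hadj)⟩
  rcases completes_adj.mp (hP.2.2.1 hu hw huw) with hG | ⟨hS, -⟩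
  · exact completes_adj.mpr (Or.inl hG)
  · refine completes_adj.mpr (Or.inr ⟨⟨hS, fun v hv => ?_⟩, huw⟩)
    rcases Sym2.mem_iff.mp hv with rfl | rfl <;> assumption

lemma completes_diff_union {R : Set V} (hP : IsSplitPartition (completes G S) C I)
    (hR : ∀ r ∈ R, ∀ w, G.Adj r w → w ∈ C \ R) :
    IsSplitPartition (completes G {e ∈ S | ∀ r ∈ R, r ∉ e}) (C \ R) (I ∪ R) := by
  refine ⟨Set.disjoint_union_right.mpr ⟨hP.1.mono_left Set.sdiff_subset, Set.disjoint_sdiff_left⟩,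
    ?_, fun u hu w hw huw => ?_, fun u hu w hw hadj => ?_⟩
  · refine Set.eq_univ_of_forall fun x => ?_
    by_cases hxR : x ∈ R
    · exact Or.inr (Or.inr hxR)
    · rcases hP.mem_or_mem x with hx | hx
      exacts [Or.inl ⟨hx, hxR⟩, Or.inr (Or.inl hx)]
  · rcases completes_adj.mp (hP.2.2.1 hu.1 hw.1 huw) with hG | ⟨hS, -⟩
    · exact completes_adj.mpr (Or.inl hG)
    · refine completes_adj.mpr (Or.inr ⟨⟨hS, fun r hr hre => ?_⟩, huw⟩)
      rcases Sym2.mem_iff.mp hre with rfl | rfl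
      exacts [hu.2 hr, hw.2 hr]
  · have hRadj : ∀ {r x}, r ∈ R → (completes G {e ∈ S | ∀ r ∈ R, r ∉ e}).Adj r x →
        x ∉ I ∪ R := by
      intro r x hr hrx hx
      rcases completes_adj.mp hrx with hG | ⟨hS, -⟩
      · have hxC := hR r hr x hG
        rcases hx with hx | hx
        exacts [hP.notMem_right hxC.1 hx, hxC.2 hx]
      · exact hS.2 r hr (Sym2.mem_mk_left r x)
    rcases hu with hu | hu
    · rcases hw with hw | hw
      · exact hP.2.2.2 u hu w hw (completes_mono (Set.sep_subset _ _) hadj)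
      · exact hRadj hw hadj.symm (Or.inl hu)
    · exact hRadj hu hadj hw

end IsSplitPartition

lemma IsIMaximalSplitPartition.mem_right_of_forall_adj {V : Type u} {H : SimpleGraph V}
    {C I : Set V} (hCI : IsIMaximalSplitPartition H C I) {v : V}
    (hv : ∀ w, H.Adj v w → w ∉ I) : v ∈ I := by
  refine (hCI.1.mem_or_mem v).resolve_left fun hvC => hCI.2 v hvC ⟨?_, ?_,
    hCI.1.2.2.1.subset Set.sdiff_subset, fun x hx y hy hxy => ?_⟩
  · exact Set.disjoint_union_right.mpr ⟨hCI.1.1.mono_left Set.sdiff_subset, Set.disjoint_sdiff_left⟩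
  · rw [Set.union_comm I, ← Set.union_assoc, Set.sdiff_union_self,
      Set.union_eq_left.mpr (Set.singleton_subset_iff.mpr hvC), hCI.1.2.1]
  · rcases hx with hx | rfl <;> rcases hy with hy | rfl
    · exact hCI.1.2.2.2 x hx y hy hxy
    · exact hv x hxy.symm hx
    · exact hv y hxy hy
    · exact hxy.ne rfl

namespace IsMinSplitCompletion

variable {V : Type u} {G : SimpleGraph V} {S : Set (Sym2 V)} {C I : Set V}

lemma forall_of_isSplitPartition_sep (hS : IsMinSplitCompletion G S) {p : Sym2 V → Prop}
    (hP : IsSplitPartition (completes G {e ∈ S | p e}) C I) : ∀ e ∈ S, p e :=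
  Set.sep_eq_self_iff_mem_true.mp
    ((Set.sep_subset S p).eq_of_not_ssubset fun h => hS.2.2 _ h ⟨C, I, hP⟩)

lemma mem_left_of_mem (hS : IsMinSplitCompletion G S)
    (hP : IsSplitPartition (completes G S) C I) {e : Sym2 V} (he : e ∈ S) {v : V}
    (hv : v ∈ e) : v ∈ C :=
  hS.forall_of_isSplitPartition_sep hP.completes_sep_subset_left e he v hv

end IsMinSplitCompletion

lemma edgesInside_le_ncard_edgeSet {V W : Type*} [Finite W] {G : SimpleGraph V}
    {X : Set V} (H : SimpleGraph W) (f : W → V) (hf : Set.range f = X)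
    (hadj : ∀ i j, G.Adj (f i) (f j) → H.Adj i j) : edgesInside G X ≤ H.edgeSet.ncard := by
  refine le_trans (Set.ncard_le_ncard ?_ (Set.toFinite _)) (Set.ncard_image_le (f := Sym2.map f))
  rintro e ⟨he, hX⟩
  induction e with
  | _ u v =>
    obtain ⟨i, rfl⟩ : u ∈ Set.range f := hf ▸ hX u (Sym2.mem_mk_left u v)
    obtain ⟨j, rfl⟩ : v ∈ Set.range f := hf ▸ hX v (Sym2.mem_mk_right _ v)
    exact ⟨s(i, j), hadj i j he, rfl⟩

lemma SubCycle5.edgesInside_le_five {V : Type u} {G : SimpleGraph V} {X : Set V}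
    (hX : SubCycle5 G X) : edgesInside G X ≤ 5 := by
  obtain ⟨f, -, hf, hadj⟩ := hX
  have hcycle : (cycleGraph 5).edgeSet.ncard = 5 := by
    rw [Set.ncard_eq_toFinset_card', ← edgeFinset]
    decide
  exact hcycle ▸ edgesInside_le_ncard_edgeSet _ f hf hadj

section AuxGraph

variable {V : Type u} {G : SimpleGraph V} {X : Set V} {k : ℕ}

lemma auxGraph_adj_inr_inl {a : Fin (k + 2)} {v : V} :
    (auxGraph G X k).Adj (Sum.inr a) (Sum.inl v) ↔ v ∈ closedNbhd G X := by
  simp [auxGraph, fromRel_adj]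

lemma auxGraph_adj_inr {a : Fin (k + 2)} {w : V ⊕ Fin (k + 2)}
    (h : (auxGraph G X k).Adj (Sum.inr a) w) : ∃ v ∈ closedNbhd G X, w = Sum.inl v := by
  cases w with
  | inl v => exact ⟨v, auxGraph_adj_inr_inl.mp h, rfl⟩
  | inr b => simp [auxGraph, fromRel_adj] at h

lemma auxGraph_adj_inl_inl_mem {v x : V} (hx : x ∈ X)
    (h : (auxGraph G X k).Adj (Sum.inl v) (Sum.inl x)) : v ∈ closedNbhd G X := by
  rw [auxGraph, fromRel_adj] at h
  rcases h.2 with (h | h) | (h | h)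
  exacts [Or.inr ⟨x, hx, h⟩, Or.inl h.1, Or.inr ⟨x, hx, h.symm⟩, Or.inl h.2]

lemma exists_inr_mem_right_of_ncard_le {S : Set (Sym2 (V ⊕ Fin (k + 2)))}
    {C I : Set (V ⊕ Fin (k + 2))} (hS : S.Finite) (hSk : S.ncard ≤ k)
    (hP : IsSplitPartition (completes (auxGraph G X k) S) C I) :
    ∃ a : Fin (k + 2), Sum.inr a ∈ I := by
  by_contra! hA
  have hAC : ∀ a : Fin (k + 2), Sum.inr a ∈ C := fun a => (hP.mem_or_mem _).resolve_right (hA a)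
  have hsucc : Function.Injective fun i : Fin (k + 1) => (Sum.inr i.succ : V ⊕ Fin (k + 2)) :=
    Sum.inr_injective.comp (Fin.succ_injective _)
  have hcard := ncard_le_ncard_of_isClique_completes hS hP.2.2.1 (hAC 0)
    (Set.range_subset_iff.mpr fun i => hAC i.succ)
    (fun ⟨i, hi⟩ => Fin.succ_ne_zero i (Sum.inr_injective hi))
    (by
      rintro _ ⟨i, rfl⟩ h
      obtain ⟨v, -, hv⟩ := auxGraph_adj_inr h
      cases hv)
  rw [Set.ncard_range_of_injective hsucc, Nat.card_eq_fintype_card, Fintype.card_fin] at hcard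
  omega

end AuxGraph

theorem auxGraph_minSplitCompletion_structure_general {V : Type u} [Fintype V]
    (G : SimpleGraph V) (k : ℕ) (X : Set V)
    (hXc : SubCycle5 G X)
    (S : Set (Sym2 (V ⊕ Fin (k + 2))))
    (hS : IsMinSplitCompletion (auxGraph G X k) S)
    (hSk : S.ncard ≤ k + edgesInside G X - 5)
    (C I : Set (V ⊕ Fin (k + 2)))
    (hCI : IsIMaximalSplitPartition (completes (auxGraph G X k) S) C I) :
    (∀ v ∈ closedNbhd G X, Sum.inl v ∈ C) ∧
    (∀ a : Fin (k + 2), Sum.inr a ∈ I) ∧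
    (∀ e ∈ S, ∀ a : Fin (k + 2), (Sum.inr a : V ⊕ Fin (k + 2)) ∉ e) ∧
    (∀ w ∈ C, w ∉ Sum.inl '' X → ∀ x ∈ X,
      (completes (auxGraph G X k) S).Adj w (Sum.inl x)) ∧
    (∀ w ∈ I, w ∉ Set.range (Sum.inr : Fin (k + 2) → V ⊕ Fin (k + 2)) → ∀ x ∈ X,
      ¬ (completes (auxGraph G X k) S).Adj w (Sum.inl x)) := by
  have hP := hCI.1
  obtain ⟨a, ha⟩ := exists_inr_mem_right_of_ncard_le (Set.toFinite S)
    (by have := hXc.edgesInside_le_five; omega) hP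
  have hNC : ∀ v ∈ closedNbhd G X, Sum.inl v ∈ C := fun v hv =>
    hP.mem_left_of_adj (completes_adj.mpr (Or.inl (auxGraph_adj_inr_inl.mpr hv).symm)) ha
  have hnbhd : ∀ b : Fin (k + 2), ∀ w, (auxGraph G X k).Adj (Sum.inr b) w →
      w ∈ C \ Set.range Sum.inr := by
    intro b w h
    obtain ⟨v, hv, rfl⟩ := auxGraph_adj_inr h
    exact ⟨hNC v hv, by simp⟩
  have hSA : ∀ e ∈ S, ∀ b : Fin (k + 2), (Sum.inr b : V ⊕ Fin (k + 2)) ∉ e := by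
    have hmove := hP.completes_diff_union (R := Set.range Sum.inr)
      (by rintro _ ⟨b, rfl⟩; exact hnbhd b)
    exact fun e he b => hS.forall_of_isSplitPartition_sep hmove e he _ ⟨b, rfl⟩
  have hAI : ∀ b : Fin (k + 2), Sum.inr b ∈ I := fun b => hCI.mem_right_of_forall_adj fun w h =>
    match completes_adj.mp h with
    | .inl hG => hP.notMem_right (hnbhd b w hG).1
    | .inr ⟨he, _⟩ => absurd (Sym2.mem_mk_left _ _) (hSA _ he b)
  refine ⟨hNC, hAI, hSA, fun w hw hwX x hx => ?_, fun w hw hwA x hx hadj => ?_⟩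
  · exact hP.2.2.1 hw (hNC x (Or.inl hx)) fun h => hwX ⟨x, hx, h.symm⟩
  · obtain ⟨v, rfl⟩ : ∃ v, w = Sum.inl v := by
      cases w with
      | inl v => exact ⟨v, rfl⟩
      | inr b => exact absurd ⟨b, rfl⟩ hwA
    rcases completes_adj.mp hadj with hG | ⟨he, -⟩
    · exact hP.notMem_right (hNC v (auxGraph_adj_inl_inl_mem hx hG)) hw
    · exact hP.notMem_right (hS.mem_left_of_mem hP he (Sym2.mem_mk_left _ _)) hw

/-- Properties of any `I`-maximal split partition of a minimal split completion of the
auxiliary graph `G'` of size at most `k' = k + |E(G[X])| - 5`. -/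
theorem auxGraph_minSplitCompletion_structure {V : Type u} [Fintype V]
    (G : SimpleGraph V) (k : ℕ) (X : Set V)
    (hX5 : X.ncard = 5) (hXc : SubCycle5 G X)
    (S : Set (Sym2 (V ⊕ Fin (k + 2))))
    (hS : IsMinSplitCompletion (auxGraph G X k) S)
    (hSk : S.ncard ≤ k + edgesInside G X - 5)
    (C I : Set (V ⊕ Fin (k + 2)))
    (hCI : IsIMaximalSplitPartition (completes (auxGraph G X k) S) C I) :
    (∀ v ∈ closedNbhd G X, Sum.inl v ∈ C) ∧
    (∀ a : Fin (k + 2), Sum.inr a ∈ I) ∧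
    (∀ e ∈ S, ∀ a : Fin (k + 2), (Sum.inr a : V ⊕ Fin (k + 2)) ∉ e) ∧
    (∀ w ∈ C, w ∉ Sum.inl '' X → ∀ x ∈ X,
      (completes (auxGraph G X k) S).Adj w (Sum.inl x)) ∧
    (∀ w ∈ I, w ∉ Set.range (Sum.inr : Fin (k + 2) → V ⊕ Fin (k + 2)) → ∀ x ∈ X,
      ¬ (completes (auxGraph G X k) S).Adj w (Sum.inl x)) :=
  auxGraph_minSplitCompletion_structure_general G k X hXc S hS hSk C I hCI
end
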